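/- arXiv:2502.00959 — 2 statements merged into one kernel-verified Lean document; each statement's English description precedes it below -/
import Mathlib

section
/- Let T be the diagonal maximal torus of U(2) with normalizer N, and Z the center of U(2). If two subgroups S, S' of T are conjugate in U(2) by an element g ∉ N, then S and S' are both contained in Z and S = S'. Consequently, if S ⊆ T is not contained in Z, then N_{U(2)}(S) = N_N(S). -/
open Matrix

abbrev U2 : Type := Matrix.unitaryGroup (Fin 2) ℂ

/-- The diagonal maximal torus `T ≤ U(2)`. -/
def Tsub : Subgroup U2 where
  carrier := {g | ∀ i j : Fin 2, i ≠ j → (g : Matrix (Fin 2) (Fin 2) ℂ) i j = 0}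
  one_mem' := by
    intro i j hij
    simp [Matrix.one_apply, hij]
  mul_mem' := by
    intro a b ha hb i j hij
    show (a.1 * b.1) i j = 0
    rw [Matrix.mul_apply]
    apply Finset.sum_eq_zero
    intro k _
    by_cases hk : k = i
    · subst hk
      rw [hb k j hij, mul_zero]
    · rw [ha i k (fun h => hk h.symm), zero_mul]
  inv_mem' := by
    intro a ha i j hij
    show (star a.1) i j = 0
    rw [Matrix.star_apply]
    rw [ha j i (Ne.symm hij)]
    simp

/-- The determinant-one subgroup `SU(2) ≤ U(2)`. -/
def SUsub : Subgroup U2 where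
  carrier := {g | (g : Matrix (Fin 2) (Fin 2) ℂ).det = 1}
  one_mem' := by simp
  mul_mem' := by
    intro a b ha hb
    simp only [Set.mem_setOf_eq] at *
    rw [Matrix.UnitaryGroup.mul_val, Matrix.det_mul, ha, hb, one_mul]
  inv_mem' := by
    intro a ha
    simp only [Set.mem_setOf_eq] at *
    rw [Matrix.UnitaryGroup.inv_val]
    rw [Matrix.star_eq_conjTranspose, Matrix.det_conjTranspose, ha]
    simp

/-!
A non-scalar diagonal matrix `s` spans the diagonal matrices together with `1`. Hence if
`g s g⁻¹` is diagonal, `g` conjugates every diagonal matrix to a diagonal one, and applying this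
to `g⁻¹` and `g s g⁻¹` as well gives `g ∈ N`. So a subgroup of `T` conjugated into `T` by some
`g ∉ N` consists of scalar matrices, which every conjugation fixes.
-/

theorem Subgroup.map_conj_eq_self_of_le_center {G : Type*} [Group G] {S : Subgroup G}
    (hS : S ≤ Subgroup.center G) (g : G) : S.map (MulAut.conj g).toMonoidHom = S := by
  have hfix : ∀ x ∈ S, MulAut.conj g x = x := fun x hx => by
    rw [MulAut.conj_apply, Subgroup.mem_center_iff.mp (hS hx) g, mul_inv_cancel_right]
  ext x
  constructor
  · rintro ⟨y, hy, rfl⟩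
    simpa [hfix y hy] using hy
  · exact fun hx => ⟨x, hx, hfix x hx⟩

theorem Matrix.IsDiag.exists_eq_smul_one_add_smul {K : Type*} [Field K]
    {d s : Matrix (Fin 2) (Fin 2) K} (hd : d.IsDiag) (hs : s.IsDiag) (hs_ne : s 0 0 ≠ s 1 1) :
    ∃ α β : K, d = α • 1 + β • s := by
  have hsub : s 0 0 - s 1 1 ≠ 0 := sub_ne_zero.mpr hs_ne
  refine ⟨(s 0 0 * d 1 1 - s 1 1 * d 0 0) / (s 0 0 - s 1 1),
    (d 0 0 - d 1 1) / (s 0 0 - s 1 1), ?_⟩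
  ext i j
  fin_cases i <;> fin_cases j
  · simp only [Fin.zero_eta, Fin.isValue, add_apply, smul_apply, one_apply_eq, smul_eq_mul]
    field_simp
    ring
  · simp [hd (show (0 : Fin 2) ≠ 1 by decide), hs (show (0 : Fin 2) ≠ 1 by decide)]
  · simp [hd (show (1 : Fin 2) ≠ 0 by decide), hs (show (1 : Fin 2) ≠ 0 by decide)]
  · simp only [Fin.mk_one, Fin.isValue, add_apply, smul_apply, one_apply_eq, smul_eq_mul]
    field_simp
    ring

theorem mem_Tsub_iff_isDiag (g : U2) : g ∈ Tsub ↔ (g : Matrix (Fin 2) (Fin 2) ℂ).IsDiag :=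
  Iff.rfl

theorem mem_center_of_mem_Tsub {s : U2} (hs : s ∈ Tsub) (h : s.1 0 0 = s.1 1 1) :
    s ∈ Subgroup.center U2 := by
  have hscalar : s.1 = s.1 0 0 • 1 := by
    ext i j
    fin_cases i <;> fin_cases j <;> simp [h, hs 0 1 (by decide), hs 1 0 (by decide)]
  refine Subgroup.mem_center_iff.mpr fun g => Subtype.ext ?_
  simp only [UnitaryGroup.mul_val]
  rw [hscalar, mul_smul_comm, smul_mul_assoc, mul_one, one_mul]

theorem conj_mem_Tsub_of_conj_mem_Tsub {g s : U2} (hs : s ∈ Tsub)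
    (hs_nc : s ∉ Subgroup.center U2) (hgs : g * s * g⁻¹ ∈ Tsub) {h : U2} (hh : h ∈ Tsub) :
    g * h * g⁻¹ ∈ Tsub := by
  have hs_ne : s.1 0 0 ≠ s.1 1 1 := fun heq => hs_nc (mem_center_of_mem_Tsub hs heq)
  obtain ⟨α, β, hαβ⟩ := ((mem_Tsub_iff_isDiag h).mp hh).exists_eq_smul_one_add_smul
    ((mem_Tsub_iff_isDiag s).mp hs) hs_ne
  have hconj : (g * h * g⁻¹).1 = α • 1 + β • (g * s * g⁻¹).1 := by
    have hgg : g.1 * (g⁻¹).1 = 1 := congrArg Subtype.val (mul_inv_cancel g)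
    simp only [UnitaryGroup.mul_val] at hgg ⊢
    rw [hαβ, mul_add, add_mul, mul_smul_comm, smul_mul_assoc, mul_one, hgg, mul_smul_comm,
      smul_mul_assoc]
  rw [mem_Tsub_iff_isDiag, hconj]
  exact (isDiag_one.smul α).add (((mem_Tsub_iff_isDiag _).mp hgs).smul β)

theorem mem_normalizer_Tsub_of_conj_mem_Tsub {g s : U2} (hs : s ∈ Tsub)
    (hs_nc : s ∉ Subgroup.center U2) (hgs : g * s * g⁻¹ ∈ Tsub) :
    g ∈ Subgroup.normalizer (Tsub : Set U2) := by
  have hgs_nc : g * s * g⁻¹ ∉ Subgroup.center U2 := fun hc =>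
    hs_nc (by simpa [mul_assoc] using Subgroup.Normal.conj_mem inferInstance _ hc g⁻¹)
  have hback : g⁻¹ * (g * s * g⁻¹) * g⁻¹⁻¹ ∈ Tsub := by simpa [mul_assoc] using hs
  refine Subgroup.mem_normalizer_iff.mpr fun h => ⟨conj_mem_Tsub_of_conj_mem_Tsub hs hs_nc hgs,
    fun hh => ?_⟩
  simpa [mul_assoc] using conj_mem_Tsub_of_conj_mem_Tsub hgs hgs_nc hback hh

theorem le_center_of_map_conj_le_Tsub {S : Subgroup U2} (hS : S ≤ Tsub) {g : U2}
    (hg : g ∉ Subgroup.normalizer (Tsub : Set U2))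
    (hmap : S.map (MulAut.conj g).toMonoidHom ≤ Tsub) : S ≤ Subgroup.center U2 := by
  intro s hs
  by_contra hs_nc
  exact hg (mem_normalizer_Tsub_of_conj_mem_Tsub (hS hs) hs_nc (hmap ⟨s, hs, rfl⟩))

theorem normalizer_le_normalizer_Tsub {S : Subgroup U2} (hS : S ≤ Tsub)
    (hS_nc : ¬ S ≤ Subgroup.center U2) :
    Subgroup.normalizer (S : Set U2) ≤ Subgroup.normalizer (Tsub : Set U2) := by
  obtain ⟨s, hs, hs_nc⟩ := Set.not_subset.mp hS_nc
  intro g hg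
  exact mem_normalizer_Tsub_of_conj_mem_Tsub (hS hs) hs_nc
    (hS ((Subgroup.mem_normalizer_iff.mp hg s).mp hs))

/-- subgroups of the maximal torus `T ≤ U(2)` that are conjugate
by an element outside the normalizer `N` of `T` are central and equal; hence a
subgroup of `T` not contained in the center has the same normalizer in `U(2)`
as in `N`. -/
theorem conj_subgroups_of_torus (S S' : Subgroup U2) (hS : S ≤ Tsub) (hS' : S' ≤ Tsub) :
    (∀ g : U2, g ∉ Subgroup.normalizer (Tsub : Set U2) →
        Subgroup.map (MulAut.conj g).toMonoidHom S = S' →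
          S ≤ Subgroup.center U2 ∧ S' ≤ Subgroup.center U2 ∧ S = S') ∧
      (¬ S ≤ Subgroup.center U2 → Subgroup.normalizer (S : Set U2) = Subgroup.normalizer (S : Set U2) ⊓ Subgroup.normalizer (Tsub : Set U2)) := by
  refine ⟨fun g hg hmap => ?_, fun hS_nc => ?_⟩
  · have hSZ : S ≤ Subgroup.center U2 := le_center_of_map_conj_le_Tsub hS hg (hmap ▸ hS')
    have hSS' : S = S' := hmap ▸ (S.map_conj_eq_self_of_le_center hSZ g).symm
    exact ⟨hSZ, hSS' ▸ hSZ, hSS'⟩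
  · exact (inf_eq_left.mpr (normalizer_le_normalizer_Tsub hS hS_nc)).symm
end

section
/- Let W = C₂ = {1, w} and Λ = ℤW = ℤ ⊕ ℤw the group ring, with w acting by multiplication. A W-invariant rank-2 sublattice of ℤW is either of the form Λ₁(m,n) = ⟨m(1+w), n(1−w)⟩ for unique positive integers m, n, or of the form Λ₂(m,n) = Λ₁(m,n) + ℤ·((m+n)/2 + ((m−n)/2)w) where m, n are positive integers with m+n and m−n both even; in the latter case Λ₁(m,n) has index 2 in Λ₂(m,n). -/
/-!
Let `m(1+w)` and `n(1−w)` generate the intersections of `Λ` with the eigenlines `ℤ(1+w)` and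
`ℤ(1−w)` of `w`; they are nonzero because `Λ` has finite index, and they are determined by `Λ`,
which gives uniqueness. Since `x ± wx ∈ Λ`, every `x ∈ Λ` has `x + wx = u·m(1+w)` and
`x − wx = v·n(1−w)` for integers `u, v`, and `u ≡ v (mod 2)`: otherwise subtracting a suitable
element of `Λ₁(m,n) ⊆ Λ` would leave `m(1+w)/2` or `n(1−w)/2` in `Λ`. If `u, v` are always even,
`Λ = Λ₁(m,n)`. If some `x` has `u, v` odd, the same reduction puts `(m(1+w) + n(1−w))/2` in `Λ`,
and `Λ = Λ₂(m,n)` is the lattice of all `x` with `u ≡ v (mod 2)`, containing `Λ₁(m,n)` with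
index 2.
-/

/-- We model the group ring `ℤW = ℤ ⊕ ℤw` of `W = C₂ = {1, w}` as `ℤ × ℤ`,
with `w` acting by swapping the coordinates; `1 + w = (1,1)` and
`1 − w = (1,−1)`. -/
abbrev ZW : Type := ℤ × ℤ

/-- The lattice `Λ₁(m,n) = ⟨m(1+w), n(1−w)⟩ ⊆ ℤW`. -/
def L1 (m n : ℤ) : AddSubgroup ZW := AddSubgroup.closure {(m, m), (n, -n)}

/-- The lattice `Λ₂(m,n) = Λ₁(m,n) + ℤ·((m+n)/2 + ((m−n)/2)w) ⊆ ℤW`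
(used when `m + n` and `m − n` are both even). -/
def L2 (m n : ℤ) : AddSubgroup ZW :=
  AddSubgroup.closure {(m, m), (n, -n), ((m + n) / 2, (m - n) / 2)}

theorem AddSubgroup.exists_pos_forall_apply_mem_iff_dvd {G : Type*} [AddGroup G]
    (Λ : AddSubgroup G) [Λ.FiniteIndex] (f : ℤ →+ G) : ∃ m > 0, ∀ a, f a ∈ Λ ↔ m ∣ a := by
  obtain ⟨g, hg⟩ := Int.subgroup_cyclic (Λ.comap f)
  rw [← AddSubgroup.zmultiples_eq_closure] at hg
  have hg0 : g ≠ 0 := by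
    rw [← Int.natAbs_ne_zero, ← Int.index_zmultiples, ← hg, AddSubgroup.index_comap]
    exact AddSubgroup.isFiniteRelIndex_of_finiteIndex.relIndex_ne_zero
  refine ⟨|g|, abs_pos.mpr hg0, fun a => ?_⟩
  rw [← AddSubgroup.mem_comap, hg, Int.mem_zmultiples_iff, abs_dvd]

theorem AddSubgroup.relIndex_sup_zmultiples_eq_two {G : Type*} [AddCommGroup G]
    {H : AddSubgroup G} {y : G} (hy : y ∉ H) (h2y : 2 • y ∈ H) :
    H.relIndex (H ⊔ zmultiples y) = 2 := by
  rw [relIndex_eq_two_iff_exists_notMem_and]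
  refine ⟨y, mem_sup_right (mem_zmultiples y), hy, ?_⟩
  rintro _ hb
  obtain ⟨h, hh, _, ⟨c, rfl⟩, rfl⟩ := mem_sup.mp hb
  obtain ⟨k, rfl | rfl⟩ := Int.even_or_odd' c
  · right
    have : h + (2 * k) • y = h + k • (2 • y) := by module
    exact this ▸ add_mem hh (zsmul_mem h2y k)
  · left
    have : h + (2 * k + 1) • y + y = h + (k + 1) • (2 • y) := by module
    exact this ▸ add_mem hh (zsmul_mem h2y (k + 1))

theorem Int.eq_of_forall_dvd_iff {m m' : ℤ} (hm : 0 ≤ m) (hm' : 0 ≤ m')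
    (h : ∀ a, m ∣ a ↔ m' ∣ a) : m = m' :=
  Int.dvd_antisymm hm hm' ((h m').2 dvd_rfl) ((h m).1 dvd_rfl)

theorem Int.two_mul_not_dvd_self {m : ℤ} (hm : m ≠ 0) : ¬ 2 * m ∣ m := by
  intro h
  have : (2 : ℤ) ∣ 1 := (mul_dvd_mul_iff_right hm).mp (by simpa using h)
  omega

section

variable {Λ : AddSubgroup ZW} {m n u v : ℤ} {x : ZW}

def halfSum (m n : ℤ) : ZW := ((m + n) / 2, (m - n) / 2)

theorem halfSum_fst_add_snd (h : Even (m + n)) : (halfSum m n).1 + (halfSum m n).2 = m := by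
  obtain ⟨k, hk⟩ := h
  simp only [halfSum]
  omega

theorem halfSum_fst_sub_snd (h : Even (m + n)) : (halfSum m n).1 - (halfSum m n).2 = n := by
  obtain ⟨k, hk⟩ := h
  simp only [halfSum]
  omega

theorem mem_L1_iff : x ∈ L1 m n ↔ 2 * m ∣ x.1 + x.2 ∧ 2 * n ∣ x.1 - x.2 := by
  rw [L1, AddSubgroup.mem_closure_pair]
  constructor
  · rintro ⟨a, b, rfl⟩
    simp only [Prod.smul_mk, Int.zsmul_eq_mul, mul_neg, Prod.mk_add_mk]
    exact ⟨⟨a, by ring⟩, ⟨b, by ring⟩⟩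
  · rintro ⟨⟨a, ha⟩, ⟨b, hb⟩⟩
    refine ⟨a, b, Prod.ext ?_ ?_⟩ <;>
      simp only [Prod.smul_mk, Int.zsmul_eq_mul, mul_neg, Prod.mk_add_mk] <;> linarith

theorem L2_eq_sup (m n : ℤ) : L2 m n = L1 m n ⊔ AddSubgroup.zmultiples (halfSum m n) := by
  rw [L2, L1, AddSubgroup.zmultiples_eq_closure, ← AddSubgroup.closure_union, halfSum,
    Set.insert_union, Set.singleton_union]

theorem L1_le_L2 (m n : ℤ) : L1 m n ≤ L2 m n :=
  L2_eq_sup m n ▸ le_sup_left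

theorem mem_L2_iff (h : Even (m + n)) :
    x ∈ L2 m n ↔ ∃ u v, x.1 + x.2 = m * u ∧ x.1 - x.2 = n * v ∧ Even (u + v) := by
  have hs := halfSum_fst_add_snd h
  have hd := halfSum_fst_sub_snd h
  rw [L2_eq_sup, AddSubgroup.mem_sup]
  constructor
  · rintro ⟨l, hl, _, ⟨c, rfl⟩, rfl⟩
    obtain ⟨⟨a, ha⟩, ⟨b, hb⟩⟩ := mem_L1_iff.mp hl
    refine ⟨2 * a + c, 2 * b + c, ?_, ?_, ⟨a + b + c, by ring⟩⟩
    · simp only [Prod.fst_add, Prod.snd_add, Prod.smul_fst, Prod.smul_snd, smul_eq_mul]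
      linear_combination ha + c * hs
    · simp only [Prod.fst_add, Prod.snd_add, Prod.smul_fst, Prod.smul_snd, smul_eq_mul]
      linear_combination hb + c * hd
  · rintro ⟨u, v, hu, hv, ⟨k, hk⟩⟩
    refine ⟨x - u • halfSum m n, mem_L1_iff.mpr ⟨⟨0, ?_⟩, ⟨v - k, ?_⟩⟩, _,
      AddSubgroup.zsmul_mem_zmultiples _ u, sub_add_cancel _ _⟩
    · simp only [Prod.fst_sub, Prod.snd_sub, Prod.smul_fst, Prod.smul_snd, smul_eq_mul]
      linear_combination hu - u * hs
    · simp only [Prod.fst_sub, Prod.snd_sub, Prod.smul_fst, Prod.smul_snd, smul_eq_mul]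
      linear_combination hv - u * hd - n * hk

theorem two_smul_halfSum_mem_L1 (h : Even (m + n)) : (2 : ℤ) • halfSum m n ∈ L1 m n := by
  refine mem_L1_iff.mpr ⟨⟨1, ?_⟩, ⟨1, ?_⟩⟩ <;>
    simp only [Prod.smul_fst, Prod.smul_snd, smul_eq_mul]
  · linear_combination 2 * halfSum_fst_add_snd h
  · linear_combination 2 * halfSum_fst_sub_snd h

theorem halfSum_notMem_L1 (hm : m ≠ 0) (h : Even (m + n)) : halfSum m n ∉ L1 m n := by
  rw [mem_L1_iff, halfSum_fst_add_snd h]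
  exact fun h' => Int.two_mul_not_dvd_self hm h'.1

theorem relIndex_L1_L2 (hm : m ≠ 0) (h : Even (m + n)) : (L1 m n).relIndex (L2 m n) = 2 := by
  rw [L2_eq_sup]
  exact AddSubgroup.relIndex_sup_zmultiples_eq_two (halfSum_notMem_L1 hm h)
    (two_smul_halfSum_mem_L1 h)

theorem L2_le (hΛ : L1 m n ≤ Λ) (hy : halfSum m n ∈ Λ) : L2 m n ≤ Λ :=
  L2_eq_sup m n ▸ sup_le hΛ (AddSubgroup.zmultiples_le_of_mem hy)

theorem exists_mem_fst_add_snd_eq_emod_two (hΛ : L1 m n ≤ Λ) (hx : x ∈ Λ)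
    (hu : x.1 + x.2 = m * u) (hv : x.1 - x.2 = n * v) :
    ∃ z ∈ Λ, z.1 + z.2 = m * (u % 2) ∧ z.1 - z.2 = n * (v % 2) := by
  set l : ZW := (m * (u / 2) + n * (v / 2), m * (u / 2) - n * (v / 2))
  have hl : l ∈ L1 m n := mem_L1_iff.mpr ⟨⟨u / 2, by ring⟩, ⟨v / 2, by ring⟩⟩
  refine ⟨x - l, sub_mem hx (hΛ hl), ?_, ?_⟩ <;> simp only [Prod.fst_sub, Prod.snd_sub, l] <;>
    rw [Int.emod_def]
  · linear_combination hu
  · linear_combination hv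

structure EigenGenerators (Λ : AddSubgroup ZW) (m n : ℤ) : Prop where
  mk_self_mem_iff : ∀ a, ((a, a) : ZW) ∈ Λ ↔ m ∣ a
  mk_neg_mem_iff : ∀ a, ((a, -a) : ZW) ∈ Λ ↔ n ∣ a

theorem exists_eigenGenerators (Λ : AddSubgroup ZW) [Λ.FiniteIndex] :
    ∃ m n, 0 < m ∧ 0 < n ∧ EigenGenerators Λ m n := by
  obtain ⟨m, hm, hdiag⟩ :=
    Λ.exists_pos_forall_apply_mem_iff_dvd ((AddMonoidHom.id ℤ).prod (AddMonoidHom.id ℤ))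
  obtain ⟨n, hn, hanti⟩ :=
    Λ.exists_pos_forall_apply_mem_iff_dvd ((AddMonoidHom.id ℤ).prod (-AddMonoidHom.id ℤ))
  exact ⟨m, n, hm, hn, hdiag, hanti⟩

theorem eigenGenerators_L1 (m n : ℤ) : EigenGenerators (L1 m n) m n where
  mk_self_mem_iff a := by simp [mem_L1_iff, ← two_mul, mul_dvd_mul_iff_left]
  mk_neg_mem_iff a := by simp [mem_L1_iff, ← two_mul, mul_dvd_mul_iff_left]

theorem eigenGenerators_L2 (hm : m ≠ 0) (hn : n ≠ 0) (h : Even (m + n)) :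
    EigenGenerators (L2 m n) m n where
  mk_self_mem_iff a := by
    rw [mem_L2_iff h]
    constructor
    · rintro ⟨u, v, hu, hv, huv⟩
      obtain rfl : v = 0 := by simpa [hn, eq_comm] using hv
      obtain ⟨k, rfl⟩ : Even u := by simpa using huv
      exact ⟨k, by linarith⟩
    · rintro ⟨k, rfl⟩
      exact ⟨2 * k, 0, by ring, by ring, by simp⟩
  mk_neg_mem_iff a := by
    rw [mem_L2_iff h]
    constructor
    · rintro ⟨u, v, hu, hv, huv⟩
      obtain rfl : u = 0 := by simpa [hm, eq_comm] using hu
      obtain ⟨k, rfl⟩ : Even v := by simpa using huv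
      exact ⟨k, by linarith⟩
    · rintro ⟨k, rfl⟩
      exact ⟨0, 2 * k, by ring, by ring, by simp⟩

namespace EigenGenerators

theorem unique {m' n' : ℤ} (h : EigenGenerators Λ m n) (h' : EigenGenerators Λ m' n')
    (hm : 0 ≤ m) (hn : 0 ≤ n) (hm' : 0 ≤ m') (hn' : 0 ≤ n') : (m, n) = (m', n') := by
  refine Prod.ext (Int.eq_of_forall_dvd_iff hm hm' fun a => ?_)
    (Int.eq_of_forall_dvd_iff hn hn' fun a => ?_)
  · rw [← h.mk_self_mem_iff, h'.mk_self_mem_iff]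
  · rw [← h.mk_neg_mem_iff, h'.mk_neg_mem_iff]

theorem L1_le (h : EigenGenerators Λ m n) : L1 m n ≤ Λ := by
  rw [L1, AddSubgroup.closure_le, Set.insert_subset_iff, Set.singleton_subset_iff]
  exact ⟨(h.mk_self_mem_iff m).mpr dvd_rfl, (h.mk_neg_mem_iff n).mpr dvd_rfl⟩

theorem dvd_fst_add_snd (h : EigenGenerators Λ m n) (hswap : ∀ x ∈ Λ, (x.2, x.1) ∈ Λ)
    (hx : x ∈ Λ) : m ∣ x.1 + x.2 :=
  (h.mk_self_mem_iff _).mp <| by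
    convert add_mem hx (hswap x hx) using 1
    exact Prod.ext rfl (add_comm _ _)

theorem dvd_fst_sub_snd (h : EigenGenerators Λ m n) (hswap : ∀ x ∈ Λ, (x.2, x.1) ∈ Λ)
    (hx : x ∈ Λ) : n ∣ x.1 - x.2 :=
  (h.mk_neg_mem_iff _).mp <| by
    convert sub_mem hx (hswap x hx) using 1
    exact Prod.ext rfl (neg_sub _ _)

theorem even_add (h : EigenGenerators Λ m n) (hm : m ≠ 0) (hn : n ≠ 0) (hx : x ∈ Λ)
    (hu : x.1 + x.2 = m * u) (hv : x.1 - x.2 = n * v) : Even (u + v) := by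
  obtain ⟨z, hz, hzu, hzv⟩ := exists_mem_fst_add_snd_eq_emod_two h.L1_le hx hu hv
  rw [Int.even_add, Int.even_iff, Int.even_iff]
  rcases Int.emod_two_eq u with hu2 | hu2 <;> rcases Int.emod_two_eq v with hv2 | hv2 <;>
    rw [hu2] at hzu <;> rw [hv2] at hzv
  · exact iff_of_true hu2 hv2
  · have hz' : z = (z.1, -z.1) := Prod.ext rfl (by linarith)
    have hdvd := mul_dvd_mul_left 2 ((h.mk_neg_mem_iff z.1).mp (hz' ▸ hz))
    exact absurd (by linarith : 2 * z.1 = n) fun hzn => Int.two_mul_not_dvd_self hn (hzn ▸ hdvd)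
  · have hz' : z = (z.1, z.1) := Prod.ext rfl (by linarith)
    have hdvd := mul_dvd_mul_left 2 ((h.mk_self_mem_iff z.1).mp (hz' ▸ hz))
    exact absurd (by linarith : 2 * z.1 = m) fun hzm => Int.two_mul_not_dvd_self hm (hzm ▸ hdvd)
  · exact iff_of_false (by omega) (by omega)

theorem even_add_and_halfSum_mem (h : EigenGenerators Λ m n) (hm : m ≠ 0) (hn : n ≠ 0)
    (hswap : ∀ x ∈ Λ, (x.2, x.1) ∈ Λ) (hx : x ∈ Λ) (hx1 : x ∉ L1 m n) :
    Even (m + n) ∧ halfSum m n ∈ Λ := by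
  obtain ⟨u, hu⟩ := h.dvd_fst_add_snd hswap hx
  obtain ⟨v, hv⟩ := h.dvd_fst_sub_snd hswap hx
  have huv := Int.even_add.mp (h.even_add hm hn hx hu hv)
  rcases Int.even_or_odd u with hu2 | hu2
  · refine absurd (mem_L1_iff.mpr ⟨?_, ?_⟩) hx1
    · rw [hu, mul_comm 2]
      exact mul_dvd_mul_left m hu2.two_dvd
    · rw [hv, mul_comm 2]
      exact mul_dvd_mul_left n (huv.mp hu2).two_dvd
  · have hv2 : Odd v := by rwa [← Int.not_even_iff_odd, ← huv, Int.not_even_iff_odd]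
    obtain ⟨z, hz, hzu, hzv⟩ := exists_mem_fst_add_snd_eq_emod_two h.L1_le hx hu hv
    rw [Int.odd_iff.mp hu2, mul_one] at hzu
    rw [Int.odd_iff.mp hv2, mul_one] at hzv
    have hzy : halfSum m n = z := by
      refine Prod.ext ?_ ?_ <;> simp only [halfSum] <;> omega
    exact ⟨⟨z.1, by linarith⟩, hzy ▸ hz⟩

theorem le_L2 (h : EigenGenerators Λ m n) (hm : m ≠ 0) (hn : n ≠ 0)
    (hswap : ∀ x ∈ Λ, (x.2, x.1) ∈ Λ) (hmn : Even (m + n)) : Λ ≤ L2 m n := by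
  intro x hx
  obtain ⟨u, hu⟩ := h.dvd_fst_add_snd hswap hx
  obtain ⟨v, hv⟩ := h.dvd_fst_sub_snd hswap hx
  exact (mem_L2_iff hmn).mpr ⟨u, v, hu, hv, h.even_add hm hn hx hu hv⟩

end EigenGenerators

end

/-- a `W`-invariant finite-index (rank 2) sublattice of `ℤW` is
either `Λ₁(m,n)` for unique positive `m, n`, or `Λ₂(m,n)` for unique positive
`m, n` with `m + n` and `m − n` even; and in the latter case `Λ₁(m,n)` has
index 2 in `Λ₂(m,n)`. -/
theorem invariant_lattice_classification :
    (∀ Λ : AddSubgroup ZW, Λ.FiniteIndex → (∀ x ∈ Λ, (x.2, x.1) ∈ Λ) →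
      (∃! mn : ℤ × ℤ, 0 < mn.1 ∧ 0 < mn.2 ∧ Λ = L1 mn.1 mn.2) ∨
      (∃! mn : ℤ × ℤ, 0 < mn.1 ∧ 0 < mn.2 ∧ Even (mn.1 + mn.2) ∧ Even (mn.1 - mn.2) ∧
        Λ = L2 mn.1 mn.2)) ∧
    (∀ m n : ℤ, 0 < m → 0 < n → Even (m + n) → Even (m - n) →
      L1 m n ≤ L2 m n ∧ (L1 m n).relIndex (L2 m n) = 2) := by
  refine ⟨fun Λ _ hswap => ?_,
    fun m n hm _ hmn _ => ⟨L1_le_L2 m n, relIndex_L1_L2 hm.ne' hmn⟩⟩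
  obtain ⟨m, n, hm, hn, hΛ⟩ := exists_eigenGenerators Λ
  by_cases hL1 : Λ ≤ L1 m n
  · left
    refine ⟨(m, n), ⟨hm, hn, hL1.antisymm hΛ.L1_le⟩, ?_⟩
    rintro ⟨m', n'⟩ ⟨hm', hn', rfl⟩
    exact (eigenGenerators_L1 m' n').unique hΛ hm'.le hn'.le hm.le hn.le
  · right
    obtain ⟨x, hx, hx1⟩ := SetLike.not_le_iff_exists.mp hL1
    obtain ⟨hmn, hy⟩ := hΛ.even_add_and_halfSum_mem hm.ne' hn.ne' hswap hx hx1
    have hΛ2 : Λ = L2 m n := (hΛ.le_L2 hm.ne' hn.ne' hswap hmn).antisymm (L2_le hΛ.L1_le hy)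
    refine ⟨(m, n), ⟨hm, hn, hmn, Int.even_sub.mpr (Int.even_add.mp hmn), hΛ2⟩, ?_⟩
    rintro ⟨m', n'⟩ ⟨hm', hn', hmn', -, rfl⟩
    exact (eigenGenerators_L2 hm'.ne' hn'.ne' hmn').unique hΛ
      hm'.le hn'.le hm.le hn.le
end
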